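/- arXiv:2408.02782 — 13 statements merged into one kernel-verified Lean document; each statement's English description precedes it below -/
import Mathlib

section
/- Let L be a finite distributive lattice and let I, J be two lower order ideals of L (i.e., subsets closed downward). Then |I| · |J| ≤ |I ∩ J| · |L|. -/
open scoped FinsetFamily

theorem order_ideal_lemma_lower (L : Type*) [DistribLattice L] [Fintype L]
    (I J : Set L) (hI : IsLowerSet I) (hJ : IsLowerSet J) :
    Nat.card I * Nat.card J ≤ Nat.card ↥(I ∩ J) * Fintype.card L := by
  classical
  letI := Classical.decEq L
  have hIJ : (I.toFinset ⊼ J.toFinset) ⊆ (I ∩ J).toFinset := by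
    intro x hx
    rw [Finset.mem_infs] at hx
    obtain ⟨a, ha, b, hb, rfl⟩ := hx
    rw [Set.mem_toFinset] at ha hb ⊢
    exact ⟨hI inf_le_left ha, hJ inf_le_right hb⟩
  have key := Finset.le_card_infs_mul_card_sups I.toFinset J.toFinset
  calc Nat.card I * Nat.card J
      = I.toFinset.card * J.toFinset.card := by
        simp [Nat.card_eq_fintype_card, Set.toFinset_card]
    _ ≤ (I.toFinset ⊼ J.toFinset).card * (I.toFinset ⊻ J.toFinset).card := key
    _ ≤ (I ∩ J).toFinset.card * Fintype.card L := by
        exact Nat.mul_le_mul (Finset.card_le_card hIJ) (Finset.card_le_univ _)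
    _ = Nat.card ↥(I ∩ J) * Fintype.card L := by
        congr 1
        rw [Nat.card_eq_fintype_card, ← Set.toFinset_card]
end

section
/- Let L be a finite distributive lattice, I a lower order ideal of L, and J an upper order ideal of L. Then |I| · |J| ≥ |I ∩ J| · |L|. -/
open scoped FinsetFamily

theorem order_ideal_lemma_mixed (L : Type*) [DistribLattice L] [Fintype L]
    (I J : Set L) (hI : IsLowerSet I) (hJ : IsUpperSet J) :
    Nat.card ↥(I ∩ J) * Fintype.card L ≤ Nat.card I * Nat.card J := by
  classical
  have key := Finset.le_card_infs_mul_card_sups (I ∩ J).toFinset (Finset.univ : Finset L)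
  have h1 : ((I ∩ J).toFinset ⊼ Finset.univ) ⊆ I.toFinset := by
    intro x hx
    obtain ⟨a, ha, b, _, rfl⟩ := Finset.mem_infs.1 hx
    simp only [Set.mem_toFinset, Set.mem_inter_iff] at ha ⊢
    exact hI inf_le_left ha.1
  have h2 : ((I ∩ J).toFinset ⊻ Finset.univ) ⊆ J.toFinset := by
    intro x hx
    obtain ⟨a, ha, b, _, rfl⟩ := Finset.mem_sups.1 hx
    simp only [Set.mem_toFinset, Set.mem_inter_iff] at ha ⊢
    exact hJ le_sup_left ha.2
  have := key.trans (Nat.mul_le_mul (Finset.card_le_card h1) (Finset.card_le_card h2))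
  have e : ∀ (S : Set L) (inst : Fintype S), (@Set.toFinset L S inst).card = Nat.card S := by
    intro S inst
    rw [Set.toFinset_card, Nat.card_eq_fintype_card]
  rw [e, e, e, Finset.card_univ] at this
  exact this
end

section
/- The sequence of Motzkin numbers (M_n)_{n≥0} is log-convex: for all n ≥ 1, M_n^2 ≤ M_{n-1} · M_{n+1}. -/
/-!
The generating function `S` of the Motzkin numbers satisfies `S = 1 + X S + X² S²`;
differentiating and eliminating `S²` gives a linear differential equation whose coefficients
are the recurrence `(n + 4) M (n + 2) = (2n + 5) M (n + 1) + 3 (n + 1) M n`. In terms of the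
ratios `r n = M (n + 1) / M n` it reads `(n + 4) r (n + 1) r n = (2n + 5) r n + 3 (n + 1)`, so
`r (n + 1)` is a decreasing function of `r n`. With `B n = (24n + 21) / (8n + 19)`, this map
sends `[B n, B (n + 1)]` into `[B (n + 1), B (n + 2)]`, so from `n = 2` on `r n` is trapped in
`[B n, B (n + 1)]`. Consecutive intervals only touch, hence `r` is monotone, which is
log-convexity.
-/

/-- The Motzkin numbers: `M (n+2) = M (n+1) + ∑_{k=0}^{n} M k * M (n-k)`. -/
def motzkin : ℕ → ℕ
  | 0 => 1
  | 1 => 1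
  | n + 2 => motzkin (n + 1) + ∑ i : Fin (n + 1), motzkin i * motzkin (n - i)

open PowerSeries Finset

theorem motzkin_add_two (n : ℕ) :
    motzkin (n + 2) = motzkin (n + 1) + ∑ i ∈ range (n + 1), motzkin i * motzkin (n - i) := by
  rw [motzkin, Fin.sum_univ_eq_sum_range (fun i => motzkin i * motzkin (n - i))]

noncomputable def motzkinSeries : ℤ⟦X⟧ :=
  mk fun n => (motzkin n : ℤ)

theorem coeff_motzkinSeries_sq (n : ℕ) :
    coeff n (motzkinSeries ^ 2) = ∑ i ∈ range (n + 1), (motzkin i * motzkin (n - i) : ℤ) := by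
  simp [sq, coeff_mul, Nat.sum_antidiagonal_eq_sum_range_succ_mk, motzkinSeries]

theorem motzkinSeries_eq :
    1 + X * motzkinSeries + X ^ 2 * motzkinSeries ^ 2 = motzkinSeries := by
  ext n
  match n with
  | 0 => simp [motzkinSeries, motzkin]
  | 1 => simp [coeff_succ_X_mul, coeff_X_pow_mul', motzkinSeries, motzkin]
  | n + 2 =>
    rw [map_add, map_add, coeff_X_pow_mul, coeff_succ_X_mul, coeff_motzkinSeries_sq]
    simp [motzkinSeries, motzkin_add_two]

theorem coeff_X_mul_derivative {R : Type*} [CommSemiring R] (f : R⟦X⟧) (n : ℕ) :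
    coeff n (X * d⁄dX R f) = n * coeff n f := by
  cases n with
  | zero => simp
  | succ n => rw [coeff_succ_X_mul, coeff_derivative]; push_cast; ring

theorem motzkinSeries_ode :
    X * d⁄dX ℤ motzkinSeries + 2 * motzkinSeries =
      X * (2 * (X * d⁄dX ℤ motzkinSeries) + 3 * motzkinSeries) +
      X ^ 2 * (3 * (X * d⁄dX ℤ motzkinSeries) + 3 * motzkinSeries) + 2 := by
  have h := congrArg (d⁄dX ℤ) motzkinSeries_eq
  simp only [map_add, Derivation.leibniz, Derivation.leibniz_pow, derivative_X,
    Derivation.map_one_eq_zero, smul_eq_mul] at h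
  linear_combination (X * (2 * X ^ 2 * motzkinSeries + X - 1)) * h +
    (-4 * X ^ 3 * d⁄dX ℤ motzkinSeries - 4 * X ^ 2 * motzkinSeries - 2) * motzkinSeries_eq

theorem motzkin_recurrence (n : ℕ) :
    (n + 4) * motzkin (n + 2) = (2 * n + 5) * motzkin (n + 1) + 3 * (n + 1) * motzkin n := by
  have h := congrArg (coeff (n + 2)) motzkinSeries_ode
  simp only [map_add, ← map_ofNat (C (R := ℤ)), coeff_C_mul, coeff_C, coeff_X_pow_mul,
    coeff_succ_X_mul, coeff_X_mul_derivative, coeff_derivative, motzkinSeries, coeff_mk] at h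
  rw [if_neg (by omega)] at h
  have hℤ : ((n + 4) * motzkin (n + 2) : ℤ) =
      (2 * n + 5) * motzkin (n + 1) + 3 * (n + 1) * motzkin n := by
    push_cast at h
    linear_combination h
  exact_mod_cast hℤ

theorem motzkin_pos (n : ℕ) : 0 < motzkin n := by
  match n with
  | 0 | 1 => simp [motzkin]
  | n + 2 => rw [motzkin_add_two]; exact Nat.add_pos_left (motzkin_pos (n + 1)) _

def motzkinRatio (n : ℕ) : ℚ := motzkin (n + 1) / motzkin n

def motzkinRatioBound (n : ℕ) : ℚ := (24 * n + 21) / (8 * n + 19)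

theorem motzkinRatio_pos (n : ℕ) : 0 < motzkinRatio n := by
  unfold motzkinRatio
  exact div_pos (mod_cast motzkin_pos _) (mod_cast motzkin_pos _)

theorem motzkinRatio_succ_mul (n : ℕ) :
    (n + 4) * motzkinRatio (n + 1) * motzkinRatio n =
      (2 * n + 5) * motzkinRatio n + 3 * (n + 1) := by
  have h₀ : (0 : ℚ) < motzkin n := mod_cast motzkin_pos n
  have h₁ : (0 : ℚ) < motzkin (n + 1) := mod_cast motzkin_pos (n + 1)
  have hrec : ((n + 4) * motzkin (n + 2) : ℚ) =
      (2 * n + 5) * motzkin (n + 1) + 3 * (n + 1) * motzkin n := mod_cast motzkin_recurrence n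
  unfold motzkinRatio
  field_simp
  linear_combination hrec

theorem motzkinRatioBound_step {n : ℕ} {x y : ℚ} (hx : 0 < x)
    (hxy : (n + 4) * y * x = (2 * n + 5) * x + 3 * (n + 1))
    (hlo : motzkinRatioBound n ≤ x) (hhi : x ≤ motzkinRatioBound (n + 1)) :
    motzkinRatioBound (n + 1) ≤ y ∧ y ≤ motzkinRatioBound (n + 2) := by
  unfold motzkinRatioBound at *
  push_cast at *
  rw [div_le_iff₀ (by positivity)] at hlo
  rw [le_div_iff₀ (by positivity)] at hhi
  have hn : (0 : ℚ) ≤ n := n.cast_nonneg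
  have hnx : 0 < (n + 4) * x := by positivity
  constructor
  · rw [div_le_iff₀ (by positivity), ← mul_le_mul_iff_of_pos_left hnx]
    nlinarith [mul_le_mul_of_nonneg_left hhi hn, mul_le_mul_of_nonneg_left hhi (mul_nonneg hn hn)]
  · rw [le_div_iff₀ (by positivity), ← mul_le_mul_iff_of_pos_left hnx]
    nlinarith [mul_le_mul_of_nonneg_left hlo hn, mul_le_mul_of_nonneg_left hlo (mul_nonneg hn hn)]

theorem motzkinRatioBound_le_motzkinRatio {n : ℕ} (hn : 2 ≤ n) :
    motzkinRatioBound n ≤ motzkinRatio n ∧ motzkinRatio n ≤ motzkinRatioBound (n + 1) := by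
  induction n, hn using Nat.le_induction with
  | base => norm_num [motzkinRatioBound, motzkinRatio, motzkin, Fin.sum_univ_succ]
  | succ n _ ih =>
    exact motzkinRatioBound_step (motzkinRatio_pos n) (motzkinRatio_succ_mul n) ih.1 ih.2

theorem motzkinRatio_monotone : Monotone motzkinRatio := by
  refine monotone_nat_of_le_succ fun n => ?_
  match n with
  | 0 | 1 => norm_num [motzkinRatio, motzkin, Fin.sum_univ_succ]
  | n + 2 =>
    exact (motzkinRatioBound_le_motzkinRatio (by omega)).2.trans
      (motzkinRatioBound_le_motzkinRatio (by omega)).1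

theorem motzkin_log_convex (n : ℕ) (hn : 1 ≤ n) :
    motzkin n ^ 2 ≤ motzkin (n - 1) * motzkin (n + 1) := by
  obtain ⟨m, rfl⟩ := Nat.exists_eq_add_of_le' hn
  have h := motzkinRatio_monotone m.le_succ
  have h₀ : (0 : ℚ) < motzkin m := mod_cast motzkin_pos m
  have h₁ : (0 : ℚ) < motzkin (m + 1) := mod_cast motzkin_pos (m + 1)
  rw [motzkinRatio, motzkinRatio, div_le_div_iff₀ h₀ h₁] at h
  rw [Nat.add_sub_cancel, sq, mul_comm (motzkin m)]
  exact_mod_cast h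
end

section
/- The sequence of large Schröder numbers (S_n)_{n≥0} is log-convex: for all n ≥ 1, S_n^2 ≤ S_{n-1} · S_{n+1}. -/
/-!
The generating function `F = ∑ Sₙ xⁿ` satisfies `F = 1 + x F + x F²`. Differentiating and
eliminating `F²` gives the first-order equation `x (x² - 6x + 1) F' = (3x - 1) F + x + 1`, whose
coefficients are the three-term recurrence `(m + 3) S_{m+2} + m S_m = (6m + 9) S_{m+1}`.

For a nonnegative nondecreasing sequence `u` satisfying this recurrence, the defect
`Δₘ = uₘ u_{m+2} - u_{m+1}²` obeys
`(m + 3)² (m + 4) Δ_{m+1} = m (m + 3) (m + 4) Δₘ + u_{m+1} ((51m + 72) u_{m+1} - 9m uₘ)`,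
so `Δₘ ≥ 0` propagates from `Δ₀ = S₀ S₂ - S₁² = 2`.
-/

/-- The large Schröder numbers: `S (n+1) = S n + ∑_{k=0}^{n} S k * S (n-k)`. -/
def schroder : ℕ → ℕ
  | 0 => 1
  | n + 1 => schroder n + ∑ i : Fin (n + 1), schroder i * schroder (n - i)

section LogConvex

variable {R : Type*} [CommRing R] [LinearOrder R] [IsStrictOrderedRing R]

theorem sq_le_mul_of_schroder_recurrence {u : ℕ → R} (hu₀ : 0 ≤ u 0) (hu : Monotone u)
    (hrec : ∀ m : ℕ, ((m : R) + 3) * u (m + 2) + m * u m = (6 * m + 9) * u (m + 1))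
    (hbase : u 1 ^ 2 ≤ u 0 * u 2) (m : ℕ) : u (m + 1) ^ 2 ≤ u m * u (m + 2) := by
  induction m with
  | zero => exact hbase
  | succ m ih =>
    set a := u m
    set b := u (m + 1)
    set c := u (m + 2)
    have key : ((m : R) + 3) ^ 2 * (m + 4) * (b * u (m + 3) - c ^ 2)
        = m * (m + 3) * (m + 4) * (a * c - b ^ 2) + b * ((51 * m + 72) * b - 9 * m * a) := by
      have hrec' := hrec (m + 1)
      push_cast at hrec'
      linear_combination ((m : R) + 3) ^ 2 * b * hrec' + (9 * b - (m + 3) * (m + 4) * c) * hrec m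
    have ha : 0 ≤ a := hu₀.trans (hu (Nat.zero_le m))
    have hab : a ≤ b := hu (Nat.le_succ m)
    have hlin : 9 * m * a ≤ (51 * m + 72) * b := by nlinarith
    have hrhs : 0 ≤ m * (m + 3) * (m + 4) * (a * c - b ^ 2)
        + b * ((51 * m + 72) * b - 9 * m * a) :=
      add_nonneg (mul_nonneg (by positivity) (sub_nonneg.2 ih))
        (mul_nonneg (ha.trans hab) (sub_nonneg.2 hlin))
    rw [← key] at hrhs
    have hΔ := nonneg_of_mul_nonneg_right hrhs (by positivity)
    linarith

end LogConvex

open PowerSeries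

theorem PowerSeries.ode_of_eq_one_add_X_mul_add_X_mul_sq {R : Type*} [CommRing R] {F : R⟦X⟧}
    (hF : F = 1 + X * F + X * F ^ 2) :
    X * (X ^ 2 - 6 * X + 1) * d⁄dX R F = (3 * X - 1) * F + X + 1 := by
  have hF' : d⁄dX R F = F + X * d⁄dX R F + F ^ 2 + 2 * X * F * d⁄dX R F := by
    conv_lhs => rw [hF]
    simp only [map_add, Derivation.leibniz, Derivation.leibniz_pow, derivative_X,
      smul_eq_mul, Derivation.map_one_eq_zero]
    ring
  linear_combination (2 * X * F + X + 1 + 4 * X ^ 2 * d⁄dX R F) * hF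
    - X * (2 * X * F + X - 1) * hF'

noncomputable def schroderSeries : ℤ⟦X⟧ := mk fun n => (schroder n : ℤ)

theorem schroderSeries_eq_one_add_X_mul_add_X_mul_sq :
    schroderSeries = 1 + X * schroderSeries + X * schroderSeries ^ 2 := by
  ext (_ | n)
  · simp [schroderSeries, schroder]
  · rw [sq, map_add, map_add, coeff_succ_X_mul, coeff_succ_X_mul, coeff_mul,
      Finset.Nat.sum_antidiagonal_eq_sum_range_succ_mk, ← Fin.sum_univ_eq_sum_range]
    simp [schroderSeries, schroder]

theorem schroder_recurrence (m : ℕ) :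
    ((m : ℤ) + 3) * schroder (m + 2) + m * schroder m = (6 * m + 9) * schroder (m + 1) := by
  rcases m with _ | m
  · simp [schroder, Fin.sum_univ_succ]
  set F := schroderSeries
  -- Nested `X * _` so that `coeff_succ_X_mul` shifts the index one step at a time.
  have h : coeff (m + 3) (X * (X * (X * d⁄dX ℤ F)) - 6 • (X * (X * d⁄dX ℤ F)) + X * d⁄dX ℤ F)
      = coeff (m + 3) (3 • (X * F) - F + X + 1) := by
    have hode := ode_of_eq_one_add_X_mul_add_X_mul_sq schroderSeries_eq_one_add_X_mul_add_X_mul_sq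
    convert congrArg (coeff (m + 3)) hode using 2 <;> ring
  simp only [map_add, map_sub, map_nsmul, coeff_succ_X_mul, coeff_derivative, coeff_X,
    coeff_one, F, schroderSeries, coeff_mk, show m + 3 ≠ 1 by omega, show m + 3 ≠ 0 by omega,
    if_false] at h
  push_cast at h ⊢
  linear_combination h

theorem schroder_monotone : Monotone schroder :=
  monotone_nat_of_le_succ fun n => by rw [schroder]; exact Nat.le_add_right _ _

theorem schroder_log_convex (n : ℕ) (hn : 1 ≤ n) :
    schroder n ^ 2 ≤ schroder (n - 1) * schroder (n + 1) := by
  obtain ⟨m, rfl⟩ := Nat.exists_eq_add_of_le' hn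
  have hbase : schroder 1 ^ 2 ≤ schroder 0 * schroder 2 := by
    simp [schroder, Fin.sum_univ_succ]
  have h := sq_le_mul_of_schroder_recurrence (u := fun n => (schroder n : ℤ)) (by positivity)
    (Nat.mono_cast.comp schroder_monotone) schroder_recurrence (by exact_mod_cast hbase) m
  rw [Nat.add_sub_cancel]
  exact_mod_cast h
end

section
/- Let (l_n)_{n≥0} be a well-indexed Lucas sequence, i.e., a real sequence with 0 < 2·l_0 ≤ l_1 and l_n = l_{n-1} + l_{n-2} for n ≥ 2. Then for all odd n ≥ 1 we have l_n^2 ≥ l_{n-1}·l_{n+1}, and for all even n ≥ 2 we have l_n^2 ≤ l_{n-1}·l_{n+1}. -/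
theorem well_indexed_lucas_alternating (l : ℕ → ℝ)
    (h0 : 0 < 2 * l 0) (h1 : 2 * l 0 ≤ l 1)
    (hrec : ∀ n, l (n + 2) = l (n + 1) + l n) :
    ∀ n, 1 ≤ n →
      (Odd n → l (n - 1) * l (n + 1) ≤ l n ^ 2) ∧
      (Even n → l n ^ 2 ≤ l (n - 1) * l (n + 1)) := by
  have key : ∀ m, l (m + 1) ^ 2 - l m * l (m + 2)
      = (-1 : ℝ) ^ m * (l 1 ^ 2 - l 0 * l 2) := by
    intro m
    induction m with
    | zero => simp
    | succ k ih =>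
      have e : k + 1 + 1 = k + 2 := rfl
      have e' : k + 1 + 2 = k + 3 := rfl
      have h2 := hrec (k + 1)
      rw [e, e'] at h2 ⊢
      have h3 := hrec k
      rw [pow_succ (-1 : ℝ) k]
      linear_combination (-1 : ℝ) * ih - l (k + 1) * h2 + l (k + 2) * h3
  have hD : 0 ≤ l 1 ^ 2 - l 0 * l 2 := by
    have h2 := hrec 0
    nlinarith
  rintro n hn
  obtain ⟨m, rfl⟩ := Nat.exists_eq_add_of_le hn
  simp only [Nat.add_sub_cancel_left, Nat.add_sub_cancel]
  constructor
  · intro hodd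
    have hev : Even m := by
      rcases Nat.even_or_odd m with h | h
      · exact h
      · exact absurd hodd (by simp [Nat.odd_add_one, Nat.not_even_iff_odd, h, parity_simps])
    have := key m
    rw [hev.neg_one_pow] at this
    have : l (m + 1) ^ 2 - l m * l (m + 2) = l 1 ^ 2 - l 0 * l 2 := by
      rw [this]; ring
    have e1 : 1 + m = m + 1 := Nat.add_comm 1 m
    have e2 : m + 1 + 1 = m + 2 := rfl
    rw [e1, e2]
    linarith
  · intro hev
    have hodd : Odd m := by
      rcases Nat.even_or_odd m with h | h
      · exact absurd hev (by simp [Nat.even_add_one, Nat.not_odd_iff_even, h, parity_simps])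
      · exact h
    have := key m
    rw [hodd.neg_one_pow] at this
    have e1 : 1 + m = m + 1 := Nat.add_comm 1 m
    have e2 : m + 1 + 1 = m + 2 := rfl
    rw [e1, e2]
    linarith
end

section
/- For any permutation π ∈ S_n, the descent set of its positional inversion table equals the descent set of π: {i : κ_i(π) > κ_{i+1}(π)} = {i : π_i > π_{i+1}}, where κ_i(π) = #{j > i : π_j < π_i}. -/
open Finset

/-- The positional inversion table of `π`: `κ i = #{j > i : π j < π i}`. -/
def posInvTable {n : ℕ} (π : Equiv.Perm (Fin n)) (i : Fin n) : ℕ :=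
  (univ.filter fun j : Fin n => i < j ∧ π j < π i).card

theorem descent_set_posInvTable (n : ℕ) (π : Equiv.Perm (Fin n)) :
    ∀ i j : Fin n, (j : ℕ) = (i : ℕ) + 1 →
      (posInvTable π j < posInvTable π i ↔ π j < π i) := by
  intro i j hij
  have hij' : i < j := by rw [Fin.lt_def]; omega
  set A := univ.filter fun k : Fin n => j < k ∧ π k < π i with hA
  set B := univ.filter fun k : Fin n => j < k ∧ π k < π j with hB
  have hBdef : posInvTable π j = B.card := rfl
  have hi : posInvTable π i = A.card + (if π j < π i then 1 else 0) := by
    unfold posInvTable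
    have hsplit : (univ.filter fun k : Fin n => i < k ∧ π k < π i)
        = A ∪ (univ.filter fun k : Fin n => k = j ∧ π k < π i) := by
      ext k
      simp only [hA, mem_union, mem_filter, mem_univ, true_and]
      constructor
      · rintro ⟨hk, hp⟩
        by_cases hkj : k = j
        · exact Or.inr ⟨hkj, hp⟩
        · left
          refine ⟨?_, hp⟩
          rw [Fin.lt_def] at hk ⊢
          have : (k : ℕ) ≠ (j : ℕ) := fun h => hkj (Fin.ext h)
          omega
      · rintro (⟨hk, hp⟩ | ⟨hk, hp⟩)
        · exact ⟨hij'.trans hk, hp⟩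
        · subst hk; exact ⟨hij', hp⟩
    rw [hsplit, card_union_of_disjoint]
    · congr 1
      by_cases h : π j < π i
      · rw [if_pos h]
        have : (univ.filter fun k : Fin n => k = j ∧ π k < π i) = {j} := by
          ext k
          simp only [mem_filter, mem_univ, true_and, mem_singleton]
          constructor
          · rintro ⟨hk, _⟩; exact hk
          · rintro rfl; exact ⟨rfl, h⟩
        rw [this, card_singleton]
      · rw [if_neg h]
        rw [card_eq_zero]
        ext k
        simp only [mem_filter, mem_univ, true_and, notMem_empty, iff_false]
        rintro ⟨rfl, hp⟩
        exact h hp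
    · rw [disjoint_left]
      intro k hkA hkJ
      simp only [hA, mem_filter, mem_univ, true_and] at hkA hkJ
      exact lt_irrefl j (hkJ.1 ▸ hkA.1)
  by_cases h : π j < π i
  · simp only [h, iff_true]
    have hsub : B ⊆ A := by
      intro k hk
      simp only [hA, hB, mem_filter, mem_univ, true_and] at hk ⊢
      exact ⟨hk.1, hk.2.trans h⟩
    have := card_le_card hsub
    rw [hBdef, hi, if_pos h]
    omega
  · simp only [h, iff_false, not_lt]
    have hne : π i ≠ π j := fun hh => (ne_of_lt hij') (π.injective hh.symm).symm
    have hlt : π i < π j := lt_of_le_of_ne (not_lt.mp h) hne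
    have hsub : A ⊆ B := by
      intro k hk
      simp only [hA, hB, mem_filter, mem_univ, true_and] at hk ⊢
      exact ⟨hk.1, hk.2.trans hlt⟩
    have := card_le_card hsub
    rw [hBdef, hi, if_neg h]
    omega
end

section
/- Let κ = (κ_1,...,κ_n) and χ = (χ_1,...,χ_n) be two positional inversion tables (0 ≤ κ_i, χ_i ≤ n - i) with the same descent set S = {i : κ_i > κ_{i+1}} = {i : χ_i > χ_{i+1}}. Then the componentwise minimum min{κ, χ} and componentwise maximum max{κ, χ} also have descent set S. -/
theorem min_max_preserve_descent_set (n : ℕ) (κ χ : Fin n → ℕ)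
    (hκ : ∀ i : Fin n, κ i ≤ n - 1 - (i : ℕ))
    (hχ : ∀ i : Fin n, χ i ≤ n - 1 - (i : ℕ))
    (hS : ∀ i j : Fin n, (j : ℕ) = (i : ℕ) + 1 → (κ j < κ i ↔ χ j < χ i)) :
    ∀ i j : Fin n, (j : ℕ) = (i : ℕ) + 1 →
      (min (κ j) (χ j) < min (κ i) (χ i) ↔ κ j < κ i) ∧
      (max (κ j) (χ j) < max (κ i) (χ i) ↔ κ j < κ i) := by
  intro i j hij
  have h := hS i j hij
  constructor <;> omega
end

section
/- A permutation π ∈ S_n avoids the pattern 213 if and only if its inversion table ι(π) is weakly increasing, i.e., ι_1 ≤ ι_2 ≤ ... ≤ ι_n, where ι_v is the number of inversions of π having v as inversion top. -/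
open Finset

/-- The inversion table entry of value `v` in permutation `π`: the number of
values `w < v` appearing after `v` in one-line notation. -/
def invTable {n : ℕ} (π : Equiv.Perm (Fin n)) (v : Fin n) : ℕ :=
  (univ.filter fun w : Fin n => w < v ∧ π.symm v < π.symm w).card

lemma mem_invTableSet {n : ℕ} (π : Equiv.Perm (Fin n)) (v w : Fin n) :
    w ∈ (univ.filter fun w : Fin n => w < v ∧ π.symm v < π.symm w) ↔
      w < v ∧ π.symm v < π.symm w := by
  simp

/-- From any 213 pattern we can extract one whose large value is one more than
the middle value. -/
lemma succ_pattern_aux {n : ℕ} (π : Equiv.Perm (Fin n)) :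
    ∀ d (i j k : Fin n), (π k).val - (π i).val ≤ d → i < j → j < k →
      π j < π i → π i < π k →
    ∃ i j k : Fin n, i < j ∧ j < k ∧ π j < π i ∧ (π k).val = (π i).val + 1 := by
  intro d
  induction d with
  | zero =>
    intro i j k hd hij hjk hji hik
    rw [Fin.lt_def] at hik
    omega
  | succ d ih =>
    intro i j k hd hij hjk hji hik
    by_cases hc : (π k).val = (π i).val + 1
    · exact ⟨i, j, k, hij, hjk, hji, hc⟩
    · have hik' : (π i).val < (π k).val := Fin.lt_def.mp hik
      have hlt : (π i).val + 1 < n := lt_of_le_of_lt (by omega) (π k).isLt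
      set a' : Fin n := ⟨(π i).val + 1, hlt⟩ with ha'
      set p : Fin n := π.symm a' with hp
      have hπp : π p = a' := π.apply_symm_apply a'
      rcases lt_trichotomy p j with hpj | hpj | hpj
      · -- pattern (p, j, k)
        refine ih p j k ?_ hpj hjk ?_ ?_
        · rw [hπp]; simp only [ha']; omega
        · have := Fin.lt_def.mp hji
          rw [Fin.lt_def, hπp]; simp only [ha']; omega
        · rw [Fin.lt_def, hπp]; simp only [ha']; omega
      · exfalso
        have : π j = a' := by rw [← hpj, hπp]
        have hlt2 := Fin.lt_def.mp hji
        rw [this] at hlt2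
        simp only [ha'] at hlt2
        omega
      · -- pattern (i, j, p) with π p = a' = π i + 1
        refine ⟨i, j, p, hij, hpj, hji, ?_⟩
        rw [hπp]

/-- A 213 pattern whose large value is `π i + 1` yields a descent in the
inversion table. -/
lemma invTable_descent {n : ℕ} (π : Equiv.Perm (Fin n)) (i j k : Fin n)
    (hij : i < j) (hjk : j < k) (hji : π j < π i)
    (hc : (π k).val = (π i).val + 1) :
    invTable π (π k) < invTable π (π i) := by
  apply Finset.card_lt_card
  constructor
  · intro w hw
    rw [mem_invTableSet] at hw ⊢
    obtain ⟨hw1, hw2⟩ := hw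
    rw [Equiv.symm_apply_apply] at hw2 ⊢
    have hwk : (w : ℕ) < (π k).val := Fin.lt_def.mp hw1
    have hne : w ≠ π i := by
      intro h
      rw [h, Equiv.symm_apply_apply] at hw2
      exact absurd (lt_trans hij (lt_trans hjk hw2)) (lt_irrefl i)
    constructor
    · rw [Fin.lt_def]
      have : (w : ℕ) ≠ (π i).val := fun h => hne (Fin.ext h)
      omega
    · exact lt_trans hij (lt_trans hjk hw2)
  · intro hsub
    have hmem : π j ∈ univ.filter fun w : Fin n =>
        w < π i ∧ π.symm (π i) < π.symm w := by
      rw [mem_invTableSet, Equiv.symm_apply_apply, Equiv.symm_apply_apply]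
      exact ⟨hji, hij⟩
    have := hsub hmem
    rw [mem_invTableSet, Equiv.symm_apply_apply, Equiv.symm_apply_apply] at this
    exact absurd this.2 (not_lt_of_gt hjk)

/-- A descent between consecutive values of the inversion table yields a 213
pattern. -/
lemma pattern_of_consec_descent {n : ℕ} (π : Equiv.Perm (Fin n)) (u v : Fin n)
    (hc : (v : ℕ) = (u : ℕ) + 1) (hdesc : invTable π v < invTable π u) :
    ∃ i j k : Fin n, i < j ∧ j < k ∧ π j < π i ∧ π i < π k := by
  set p : Fin n := π.symm u with hp
  set q : Fin n := π.symm v with hq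
  have hπp : π p = u := π.apply_symm_apply u
  have hπq : π q = v := π.apply_symm_apply v
  have huv : u < v := Fin.lt_def.mpr (by omega)
  have hpq : p ≠ q := by
    intro h
    have : u = v := by rw [← hπp, ← hπq, h]
    exact absurd this (ne_of_lt huv)
  have hplt : p < q := by
    rcases lt_or_gt_of_ne hpq with h | h
    · exact h
    · -- if u appears after v, then invTable u < invTable v, contradiction
      exfalso
      have hmono : invTable π u < invTable π v := by
        apply Finset.card_lt_card
        constructor
        · intro w hw
          rw [mem_invTableSet] at hw ⊢
          exact ⟨lt_trans hw.1 huv, lt_trans h hw.2⟩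
        · intro hsub
          have hmem : u ∈ univ.filter fun w : Fin n =>
              w < v ∧ π.symm v < π.symm w := by
            rw [mem_invTableSet, ← hq, ← hp]
            exact ⟨huv, h⟩
          have := hsub hmem
          rw [mem_invTableSet] at this
          exact absurd this.1 (lt_irrefl u)
      omega
  -- now find w ∈ S(u) \ S(v)
  have hnsub : ¬ (univ.filter fun w : Fin n => w < u ∧ π.symm u < π.symm w) ⊆
      (univ.filter fun w : Fin n => w < v ∧ π.symm v < π.symm w) :=
    fun hs => absurd (Finset.card_le_card hs) (not_le.mpr hdesc)
  obtain ⟨w, hwu, hwv⟩ := Finset.not_subset.mp hnsub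
  rw [mem_invTableSet] at hwu
  rw [mem_invTableSet] at hwv
  push_neg at hwv
  obtain ⟨hw1, hw2⟩ := hwu
  have hw3 : w < v := lt_trans hw1 huv
  have hw4 : π.symm w ≤ π.symm v := hwv hw3
  have hwne : w ≠ v := ne_of_lt hw3
  have hsne : π.symm w ≠ π.symm v := fun h => hwne (π.symm.injective h)
  have hw5 : π.symm w < π.symm v := lt_of_le_of_ne hw4 hsne
  refine ⟨p, π.symm w, q, ?_, ?_, ?_, ?_⟩
  · exact hw2
  · exact hw5
  · rw [hπp, Equiv.apply_symm_apply]; exact hw1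
  · rw [hπp, hπq]; exact huv

lemma pattern_of_descent_aux {n : ℕ} (π : Equiv.Perm (Fin n)) :
    ∀ d (u v : Fin n), (v : ℕ) - (u : ℕ) ≤ d → u < v →
      invTable π v < invTable π u →
    ∃ i j k : Fin n, i < j ∧ j < k ∧ π j < π i ∧ π i < π k := by
  intro d
  induction d with
  | zero =>
    intro u v hd huv _
    rw [Fin.lt_def] at huv
    omega
  | succ d ih =>
    intro u v hd huv hdesc
    by_cases hc : (v : ℕ) = (u : ℕ) + 1
    · exact pattern_of_consec_descent π u v hc hdesc
    · have huv' := Fin.lt_def.mp huv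
      have hlt : (u : ℕ) + 1 < n := lt_of_le_of_lt (by omega) v.isLt
      set w : Fin n := ⟨(u : ℕ) + 1, hlt⟩ with hw
      by_cases h1 : invTable π w < invTable π u
      · exact ih u w (by simp [hw]; omega) (Fin.lt_def.mpr (by simp [hw])) h1
      · have h2 : invTable π v < invTable π w := by omega
        exact ih w v (by simp [hw]; omega) (Fin.lt_def.mpr (by simp [hw]; omega)) h2

theorem avoids213_iff_invTable_monotone (n : ℕ) (π : Equiv.Perm (Fin n)) :
    (¬ ∃ i j k : Fin n, i < j ∧ j < k ∧ π j < π i ∧ π i < π k) ↔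
      Monotone (invTable π) := by
  constructor
  · intro hav
    intro u v huv
    by_contra h
    push_neg at h
    have huv' : u < v := by
      rcases lt_or_eq_of_le huv with h' | h'
      · exact h'
      · exfalso; rw [h'] at h; exact absurd h (lt_irrefl _)
    exact hav (pattern_of_descent_aux π (v : ℕ) u v (by omega) huv' h)
  · intro hmono
    rintro ⟨i, j, k, hij, hjk, hji, hik⟩
    obtain ⟨i', j', k', hij', hjk', hji', hc'⟩ :=
      succ_pattern_aux π ((π k).val - (π i).val) i j k le_rfl hij hjk hji hik
    have hle : π i' ≤ π k' := Fin.le_def.mpr (by omega)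
    have := hmono hle
    have := invTable_descent π i' j' k' hij' hjk' hji' hc'
    omega
end

section
/- A permutation π ∈ S_n avoids the classical pattern 213 if and only if it avoids the bivincular pattern 2̄13, i.e., π contains positions i < j < k with π_j < π_i < π_k if and only if it contains positions i < j < k with π_j < π_i and π_k = π_i + 1. -/
private lemma aux213 (n : ℕ) (π : Equiv.Perm (Fin n)) :
    ∀ d : ℕ, ∀ i j k : Fin n, i < j → j < k → π j < π i → π i < π k →
      (π k : ℕ) - (π i : ℕ) = d →
      (∃ i j k : Fin n, i < j ∧ j < k ∧ π j < π i ∧ (π k : ℕ) = (π i : ℕ) + 1) := by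
  intro d
  induction d using Nat.strong_induction_on with
  | _ d ih =>
    intro i j k hij hjk hji hik hd
    have h1 : (π i : ℕ) + 1 ≤ (π k : ℕ) := hik
    have hn : (π i : ℕ) + 1 < n := lt_of_le_of_lt h1 (π k).isLt
    set v : Fin n := ⟨(π i : ℕ) + 1, hn⟩ with hv
    set k' : Fin n := π.symm v with hk'
    have hπk' : π k' = v := π.apply_symm_apply v
    rcases lt_or_ge j k' with h | h
    · exact ⟨i, j, k', hij, h, hji, by rw [hπk']⟩
    · have hne : k' ≠ j := by
        intro he
        have : π j = v := by rw [← he, hπk']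
        have : (π j : ℕ) = (π i : ℕ) + 1 := by rw [this]
        omega
      have hk'j : k' < j := lt_of_le_of_ne h hne
      have hjk' : π j < π k' := by
        rw [hπk']
        exact lt_trans hji (by simp [Fin.lt_def, hv])
      have hk'k : π k' < π k := by
        have hne2 : π k' ≠ π k := by
          intro he
          have h2 : k' = k := π.injective he
          rw [h2] at hk'j
          exact absurd (lt_trans hk'j hjk) (lt_irrefl k)
        rw [hπk'] at hne2 ⊢
        exact lt_of_le_of_ne (by simpa [Fin.le_def, hv] using h1) hne2
      have hd' : (π k : ℕ) - (π k' : ℕ) < d := by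
        rw [hπk']; simp only [hv]; omega
      exact ih _ hd' k' j k hk'j hjk hjk' hk'k rfl

theorem avoids213_iff_avoids_bivincular (n : ℕ) (π : Equiv.Perm (Fin n)) :
    (∃ i j k : Fin n, i < j ∧ j < k ∧ π j < π i ∧ π i < π k) ↔
      (∃ i j k : Fin n, i < j ∧ j < k ∧ π j < π i ∧ (π k : ℕ) = (π i : ℕ) + 1) := by
  constructor
  · rintro ⟨i, j, k, hij, hjk, hji, hik⟩
    exact aux213 n π _ i j k hij hjk hji hik rfl
  · rintro ⟨i, j, k, hij, hjk, hji, hik⟩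
    exact ⟨i, j, k, hij, hjk, hji, by simp [Fin.lt_def, hik]⟩
end

section
/- For any fixed k ≥ 1, the sequence of Stirling numbers of the second kind (S(n,k))_{n≥0} is log-concave in n: for all n ≥ 1, S(n,k)^2 ≥ S(n-1,k) · S(n+1,k). -/
/-- Stirling numbers of the second kind. -/
def stirling2 : ℕ → ℕ → ℕ
  | 0, 0 => 1
  | 0, _ + 1 => 0
  | _ + 1, 0 => 0
  | n + 1, k + 1 => (k + 1) * stirling2 n (k + 1) + stirling2 n k

lemma stirling2_zero_of_lt : ∀ n k, n < k → stirling2 n k = 0 := by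
  intro n
  induction n with
  | zero =>
    intro k hk
    cases k with
    | zero => omega
    | succ k => rfl
  | succ n ih =>
    intro k hk
    cases k with
    | zero => omega
    | succ k =>
      simp [stirling2, ih (k+1) (by omega), ih k (by omega)]

lemma stirling2_pos : ∀ n k, k + 1 ≤ n → 0 < stirling2 n (k+1) := by
  intro n
  induction n with
  | zero => intro k hk; omega
  | succ n ih =>
    intro k hk
    cases k with
    | zero =>
      cases n with
      | zero => simp [stirling2]
      | succ m =>
        have := ih 0 (by omega)
        simp only [stirling2]
        positivity
    | succ j =>
      have := ih j (by omega)
      simp only [stirling2]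
      positivity

lemma stirling2_k_logconcave : ∀ n k,
    stirling2 n k * stirling2 n (k+2) ≤ stirling2 n (k+1) ^ 2 := by
  intro n
  induction n with
  | zero =>
    intro k
    cases k with
    | zero => simp [stirling2]
    | succ k => simp [stirling2]
  | succ n ih =>
    intro k
    cases k with
    | zero =>
      have : stirling2 (n+1) 0 = 0 := by simp [stirling2]
      simp [this]
    | succ j =>
      have h1 := ih j
      have h2 := ih (j+1)
      have h3 : stirling2 n j * stirling2 n (j+3) ≤
          stirling2 n (j+1) * stirling2 n (j+2) := by
        by_cases hd : n < j + 3
        · rw [stirling2_zero_of_lt n (j+3) hd]; simp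
        · push_neg at hd
          have hb : 0 < stirling2 n (j+1) := stirling2_pos n j (by omega)
          have hc : 0 < stirling2 n (j+2) := stirling2_pos n (j+1) (by omega)
          have key : (stirling2 n j * stirling2 n (j+3)) *
              (stirling2 n (j+1) * stirling2 n (j+2)) ≤
              (stirling2 n (j+1) * stirling2 n (j+2)) *
              (stirling2 n (j+1) * stirling2 n (j+2)) := by
            calc (stirling2 n j * stirling2 n (j+3)) *
                (stirling2 n (j+1) * stirling2 n (j+2))
                = (stirling2 n j * stirling2 n (j+2)) *
                  (stirling2 n (j+1) * stirling2 n (j+3)) := by ring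
              _ ≤ stirling2 n (j+1) ^ 2 * stirling2 n (j+2) ^ 2 :=
                  Nat.mul_le_mul h1 h2
              _ = (stirling2 n (j+1) * stirling2 n (j+2)) *
                  (stirling2 n (j+1) * stirling2 n (j+2)) := by ring
          exact Nat.le_of_mul_le_mul_right key (by positivity)
      show stirling2 (n+1) (j+1) * stirling2 (n+1) (j+3) ≤
          stirling2 (n+1) (j+2) ^ 2
      simp only [stirling2]
      nlinarith [h1, h2, h3, Nat.mul_le_mul_left ((j+1)*(j+3)) h2,
        Nat.mul_le_mul_left (j+3) h3, Nat.mul_le_mul_left (j+1) h3]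

lemma stirling2_cross : ∀ m j,
    stirling2 m (j+1) * stirling2 (m+1) j ≤
      stirling2 (m+1) (j+1) * stirling2 m j := by
  intro m j
  cases j with
  | zero =>
    have : stirling2 (m+1) 0 = 0 := by simp [stirling2]
    simp [this]
  | succ i =>
    have h1 := stirling2_k_logconcave m i
    simp only [stirling2]
    nlinarith [h1]

theorem stirling2_log_concave (k : ℕ) (hk : 1 ≤ k) (n : ℕ) (hn : 1 ≤ n) :
    stirling2 (n - 1) k * stirling2 (n + 1) k ≤ (stirling2 n k) ^ 2 := by
  obtain ⟨j, rfl⟩ : ∃ j, k = j + 1 := ⟨k - 1, by omega⟩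
  obtain ⟨m, rfl⟩ : ∃ m, n = m + 1 := ⟨n - 1, by omega⟩
  have hcross := stirling2_cross m j
  have e1 : stirling2 (m + 1 + 1) (j+1) =
      (j+1) * stirling2 (m+1) (j+1) + stirling2 (m+1) j := rfl
  have e2 : stirling2 (m+1) (j+1) =
      (j+1) * stirling2 m (j+1) + stirling2 m j := rfl
  simp only [Nat.add_sub_cancel]
  nlinarith [hcross, e1, e2]
end

section
/- For any fixed k ≥ 1, the sequence of Narayana numbers (N(n,k))_{n≥k} is log-concave in n: for all n ≥ k+1, N(n,k)^2 ≥ N(n-1,k) · N(n+1,k), where N(n,k) = (1/n)·binomial(n, k-1)·binomial(n, k). -/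
/-- The Narayana number `N(n,k) = (1/n) C(n,k-1) C(n,k)` as a rational number. -/
def narayana (n k : ℕ) : ℚ :=
  (n.choose (k - 1) * n.choose k : ℚ) / n

lemma succ_mul_choose' (n r : ℕ) :
    (n + 1) * n.choose r = (n + 1).choose r * (n + 1 - r) := by
  rw [Nat.add_one_mul_choose_eq, Nat.choose_succ_right_eq]

lemma narayana_key (j m : ℕ) :
    ((j+m+1).choose j) * ((j+m+1).choose (j+1)) * ((j+m+3).choose j) *
      ((j+m+3).choose (j+1)) * (j+m+2)^2 ≤
    ((j+m+2).choose j)^2 * ((j+m+2).choose (j+1))^2 * ((j+m+1)*(j+m+3)) := by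
  set c1 := (j+m+1).choose j with hc1
  set c2 := (j+m+1).choose (j+1) with hc2
  set A := (j+m+2).choose j with hA
  set B := (j+m+2).choose (j+1) with hB
  set d1 := (j+m+3).choose j with hd1
  set d2 := (j+m+3).choose (j+1) with hd2
  have h1 : (j+m+2) * c1 = A * (m+2) := by
    have := succ_mul_choose' (j+m+1) j
    simpa [show j+m+1+1 = j+m+2 by ring, show j+m+2-j = m+2 by omega] using this
  have h2 : (j+m+2) * c2 = B * (m+1) := by
    have := succ_mul_choose' (j+m+1) (j+1)
    simpa [show j+m+1+1 = j+m+2 by ring, show j+m+2-(j+1) = m+1 by omega] using this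
  have h3 : (j+m+3) * A = d1 * (m+3) := by
    have := succ_mul_choose' (j+m+2) j
    simpa [show j+m+2+1 = j+m+3 by ring, show j+m+3-j = m+3 by omega] using this
  have h4 : (j+m+3) * B = d2 * (m+2) := by
    have := succ_mul_choose' (j+m+2) (j+1)
    simpa [show j+m+2+1 = j+m+3 by ring, show j+m+3-(j+1) = m+2 by omega] using this
  apply Nat.le_of_mul_le_mul_right _ (show 0 < (m+2)*(m+3) by positivity)
  calc c1 * c2 * d1 * d2 * (j+m+2)^2 * ((m+2)*(m+3))
      = ((j+m+2)*c1) * ((j+m+2)*c2) * (d1*(m+3)) * (d2*(m+2)) := by ring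
    _ = (A*(m+2)) * (B*(m+1)) * ((j+m+3)*A) * ((j+m+3)*B) := by rw [h1, h2, ← h3, ← h4]
    _ = (A^2*B^2*(m+2)*(j+m+3)) * ((m+1)*(j+m+3)) := by ring
    _ ≤ (A^2*B^2*(m+2)*(j+m+3)) * ((m+3)*(j+m+1)) := by
        apply Nat.mul_le_mul_left
        nlinarith
    _ = A^2 * B^2 * ((j+m+1)*(j+m+3)) * ((m+2)*(m+3)) := by ring

theorem narayana_log_concave (k : ℕ) (hk : 1 ≤ k) (n : ℕ) (hn : k + 1 ≤ n) :
    narayana (n - 1) k * narayana (n + 1) k ≤ (narayana n k) ^ 2 := by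
  obtain ⟨j, rfl⟩ : ∃ j, k = j + 1 := ⟨k - 1, by omega⟩
  obtain ⟨m, rfl⟩ : ∃ m, n = j + m + 2 := ⟨n - j - 2, by omega⟩
  have e1 : j + m + 2 - 1 = j + m + 1 := by omega
  have e2 : j + 1 - 1 = j := by omega
  unfold narayana
  rw [e1, e2, show j + m + 2 + 1 = j + m + 3 by ring]
  rw [div_mul_div_comm, div_pow, div_le_div_iff₀ (by positivity) (by positivity)]
  have key := narayana_key j m
  push_cast
  calc ((j+m+1).choose j : ℚ) * ((j+m+1).choose (j+1)) *
        (((j+m+3).choose j) * ((j+m+3).choose (j+1))) * ((j+m+2):ℚ)^2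
      = ((((j+m+1).choose j) * ((j+m+1).choose (j+1)) * ((j+m+3).choose j) *
          ((j+m+3).choose (j+1)) * (j+m+2)^2 : ℕ) : ℚ) := by push_cast; ring
    _ ≤ ((((j+m+2).choose j)^2 * (((j+m+2).choose (j+1)))^2 * ((j+m+1)*(j+m+3)) : ℕ) : ℚ) := by
        exact_mod_cast key
    _ = (((j+m+2).choose j : ℚ) * ((j+m+2).choose (j+1)))^2 * (((j+m+1):ℚ) * ((j+m+3))) := by
        push_cast; ring
end

section
/- Let F = (f_1 < f_2 < ... < f_k) be an increasing sequence of positive integers with f_1 = 1, and let M = {{1^{m_1}, ..., k^{m_k}}} be a multiset with m_1 + ... + m_k = n - k. Then there exists a restricted growth function ρ of length n with first-occurrence positions F and remaining multiset M if and only if f_i - i ≤ m_1 + m_2 + ... + m_{i-1} for all 2 ≤ i ≤ k. -/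
/-!
Positions before `f_i` can only carry the values `1, …, i - 1`, which occur
`(i - 1) + m_1 + ⋯ + m_{i-1}` times in total; hence the bound is necessary.

Conversely, put `i` at position `f_i` and fill the remaining positions from left to right with
the sorted word `1^{m_1} 2^{m_2} ⋯ k^{m_k}`. Suppose the `r`-th remaining position (counting
from `0`) receives the letter `j` but lies before `f_j`. Then `r` is less than the number
`f_j - j` of remaining positions before `f_j`, which the bound makes at most
`m_1 + ⋯ + m_{j-1}`, the number of letters smaller than `j`; so the `r`-th letter is smaller
than `j`, a contradiction. Hence every repeated value has occurred before, and the word is a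
restricted growth function with the prescribed data.
-/

open Finset

/-- A restricted growth function of length `n`: all values are at least `1`, and
each value is at most one more than the maximum of the previous values
(so in particular the first value is `1`). -/
def IsRGF {n : ℕ} (ρ : Fin n → ℕ) : Prop :=
  (∀ i, 1 ≤ ρ i) ∧ ∀ i : Fin n, ρ i ≤ 1 + (univ.filter (· < i)).sup ρ

namespace RGF

lemma isRGF_of_exists_lt {n : ℕ} {ρ : Fin n → ℕ} (hpos : ∀ p, 1 ≤ ρ p)
    (hstep : ∀ p, 1 < ρ p → ∃ q < p, ρ p ≤ ρ q + 1) : IsRGF ρ := by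
  refine ⟨hpos, fun p => ?_⟩
  by_cases h : 1 < ρ p
  · obtain ⟨q, hqp, hq⟩ := hstep p h
    have := le_sup (f := ρ) (mem_filter.2 ⟨mem_univ q, hqp⟩ : q ∈ univ.filter (· < p))
    omega
  · omega

section PrefixSums

variable {k : ℕ} (m : Fin k → ℕ)

def prefixSum (j : ℕ) : ℕ := ∑ i ∈ univ.filter (fun i : Fin k => (i : ℕ) < j), m i

def block (r : ℕ) : ℕ := #(univ.filter fun i : Fin k => prefixSum m (i + 1) ≤ r)

variable {m}

lemma prefixSum_mono : Monotone (prefixSum m) := fun _ _ h =>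
  sum_le_sum_of_subset (monotone_filter_right _ fun _ _ hi => lt_of_lt_of_le hi h)

lemma prefixSum_of_le {j : ℕ} (hj : k ≤ j) : prefixSum m j = ∑ i, m i := by
  rw [prefixSum, filter_true_of_mem fun (i : Fin k) _ => lt_of_lt_of_le i.isLt hj]

lemma prefixSum_le_sum (j : ℕ) : prefixSum m j ≤ ∑ i, m i :=
  sum_le_sum_of_subset (filter_subset _ _)

lemma prefixSum_succ (i : Fin k) : prefixSum m (i + 1) = prefixSum m i + m i := by
  rw [prefixSum, prefixSum, add_comm _ (m i), ← sum_insert (by simp)]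
  congr 1
  ext j
  simp [le_iff_eq_or_lt, Fin.val_inj]

lemma block_lt_iff {r j : ℕ} (hj : j ≤ k) : block m r < j ↔ r < prefixSum m j := by
  constructor
  · intro hlt
    by_contra! hle
    have hsub : univ.filter (fun i : Fin k => (i : ℕ) < j) ⊆
        univ.filter fun i : Fin k => prefixSum m (i + 1) ≤ r :=
      monotone_filter_right _ fun i _ hi => (prefixSum_mono (Nat.succ_le_of_lt hi)).trans hle
    have := card_le_card hsub
    rw [Fin.card_filter_val_lt, min_eq_right hj] at this
    exact absurd hlt (not_lt.2 this)
  · intro hlt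
    have hsub : univ.filter (fun i : Fin k => prefixSum m (i + 1) ≤ r) ⊆
        univ.filter fun i : Fin k => (i : ℕ) < j - 1 :=
      monotone_filter_right _ fun i _ hi =>
        Nat.lt_sub_of_add_lt (prefixSum_mono.reflect_lt (lt_of_le_of_lt hi hlt))
    have hj0 : 0 < j := Nat.pos_of_ne_zero fun h => by simp [h, prefixSum] at hlt
    calc block m r ≤ _ := card_le_card hsub
      _ ≤ j - 1 := by rw [Fin.card_filter_val_lt]; exact min_le_right _ _
      _ < j := Nat.sub_lt hj0 one_pos

lemma block_eq_iff {r : ℕ} (i : Fin k) :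
    block m r = i ↔ prefixSum m i ≤ r ∧ r < prefixSum m (i + 1) := by
  rw [← block_lt_iff i.isLt, ← not_lt, ← block_lt_iff i.isLt.le]
  omega

lemma block_lt_of_lt_sum {r : ℕ} (hr : r < ∑ i, m i) : block m r < k :=
  (block_lt_iff le_rfl).2 (by rwa [prefixSum_of_le le_rfl])

lemma card_block_eq {N : ℕ} (hN : ∑ i, m i ≤ N) (i : Fin k) :
    #{r ∈ range N | block m r = i} = m i := by
  have hS : prefixSum m (i + 1) ≤ N := (prefixSum_le_sum _).trans hN
  rw [show {r ∈ range N | block m r = i} = Ico (prefixSum m i) (prefixSum m (i + 1)) by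
    ext r; simp only [mem_filter, mem_range, mem_Ico, block_eq_iff]; omega]
  rw [Nat.card_Ico, prefixSum_succ]
  omega

end PrefixSums

section Positions

variable {k n : ℕ} {g : Fin k → Fin n}

variable (g) in
def nonFirst : Finset (Fin n) := (univ.image g)ᶜ

variable (g) in
def rank (p : Fin n) : ℕ := #{q ∈ nonFirst g | q < p}

lemma mem_nonFirst {p : Fin n} : p ∈ nonFirst g ↔ ∀ i, g i ≠ p := by
  simp [nonFirst]

lemma card_nonFirst (hg : Function.Injective g) : #(nonFirst g) = n - k := by
  rw [nonFirst, card_compl, card_image_of_injective _ hg, card_univ, Fintype.card_fin,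
    Fintype.card_fin]

lemma rank_lt_rank {p q : Fin n} (hp : p ∈ nonFirst g) (hpq : p < q) : rank g p < rank g q :=
  card_lt_card ⟨monotone_filter_right _ fun _ _ h => h.trans hpq,
    fun h => lt_irrefl p (mem_filter.1 (h (mem_filter.2 ⟨hp, hpq⟩))).2⟩

lemma rank_lt_card {p : Fin n} (hp : p ∈ nonFirst g) : rank g p < #(nonFirst g) :=
  card_lt_card ⟨filter_subset _ _, fun h => lt_irrefl p (mem_filter.1 (h hp)).2⟩

lemma rank_apply (hg : StrictMono g) (i : Fin k) : rank g (g i) = g i - i := by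
  have hsub : (Iio i).image g ⊆ Iio (g i) := by
    simp [subset_iff, hg.lt_iff_lt]
  have heq : {q ∈ nonFirst g | q < g i} = Iio (g i) \ (Iio i).image g := by
    ext q
    simp only [mem_filter, mem_nonFirst, mem_sdiff, mem_Iio, mem_image]
    constructor
    · rintro ⟨hq, hlt⟩
      exact ⟨hlt, fun ⟨j, _, hj⟩ => hq j hj⟩
    · rintro ⟨hlt, hq⟩
      exact ⟨fun j hj => hq ⟨j, hg.lt_iff_lt.1 (hj ▸ hlt), hj⟩, hlt⟩
  rw [rank, heq, card_sdiff_of_subset hsub, card_image_of_injective _ hg.injective,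
    Fin.card_Iio, Fin.card_Iio]

lemma rank_injOn : Set.InjOn (rank g) (nonFirst g) :=
  StrictMonoOn.injOn fun _ hp _ _ => rank_lt_rank hp

lemma image_rank_nonFirst (hg : Function.Injective g) :
    (nonFirst g).image (rank g) = range (n - k) := by
  refine eq_of_subset_of_card_le (fun r hr => ?_) ?_
  · obtain ⟨p, hp, rfl⟩ := mem_image.1 hr
    exact mem_range.2 (card_nonFirst hg ▸ rank_lt_card hp)
  · rw [card_range, card_image_of_injOn rank_injOn, card_nonFirst hg]

end Positions

section Construction

variable {k n : ℕ} {m : Fin k → ℕ} {g : Fin k → Fin n}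

variable (m g) in
/-- The positions outside the range of `g` receive, from left to right, the letters of the sorted
word `1 ^ m 0, 2 ^ m 1, …, k ^ m (k - 1)`. -/
noncomputable def canonicalRGF (p : Fin n) : ℕ :=
  if h : ∃ i, g i = p then h.choose + 1 else block m (rank g p) + 1

lemma canonicalRGF_apply (hg : Function.Injective g) (i : Fin k) :
    canonicalRGF m g (g i) = i + 1 := by
  have h : ∃ j, g j = g i := ⟨i, rfl⟩
  rw [canonicalRGF, dif_pos h, hg h.choose_spec]

lemma canonicalRGF_of_mem_nonFirst {p : Fin n} (hp : p ∈ nonFirst g) :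
    canonicalRGF m g p = block m (rank g p) + 1 :=
  dif_neg fun ⟨i, hi⟩ => mem_nonFirst.1 hp i hi

lemma card_canonicalRGF_eq (hg : StrictMono g) (hm : ∑ i, m i = n - k) (i : Fin k) :
    #{p | canonicalRGF m g p = i + 1} = m i + 1 := by
  have hfirst : #{p ∈ univ.image g | canonicalRGF m g p = i + 1} = 1 := by
    rw [filter_image, card_image_of_injective _ hg.injective, card_eq_one]
    refine ⟨i, ?_⟩
    ext j
    simp [canonicalRGF_apply hg.injective, Fin.val_inj]
  have hrest : #{p ∈ nonFirst g | canonicalRGF m g p = i + 1} = m i := by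
    rw [filter_congr fun p hp => by rw [canonicalRGF_of_mem_nonFirst hp, add_left_inj],
      ← card_image_of_injOn (rank_injOn.mono (filter_subset _ _)),
      ← filter_image (p := (block m · = i)), image_rank_nonFirst hg.injective,
      card_block_eq hm.le]
  calc #{p | canonicalRGF m g p = i + 1}
      = #{p ∈ nonFirst g | canonicalRGF m g p = i + 1} +
          #{p ∈ univ.image g | canonicalRGF m g p = i + 1} := by
        rw [← card_union_of_disjoint (disjoint_filter_filter disjoint_compl_left),
          ← filter_union, nonFirst, union_comm, union_compl]
    _ = m i + 1 := by rw [hrest, hfirst]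

variable (hg : StrictMono g) (hm : ∑ i, m i = n - k)
  (hgS : ∀ i, (g i : ℕ) ≤ i + prefixSum m i)
include hg hm hgS

lemma exists_le_canonicalRGF_eq (p : Fin n) : ∃ j, g j ≤ p ∧ canonicalRGF m g p = j + 1 := by
  by_cases hp : p ∈ nonFirst g
  · have hr : rank g p < ∑ i, m i := hm ▸ card_nonFirst hg.injective ▸ rank_lt_card hp
    let j : Fin k := ⟨block m (rank g p), block_lt_of_lt_sum hr⟩
    refine ⟨j, not_lt.1 fun hlt => ?_, canonicalRGF_of_mem_nonFirst hp⟩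
    -- `rank g p < rank g (g j) = g j - j ≤ prefixSum m j ≤ rank g p`
    have h₁ := rank_apply hg j ▸ rank_lt_rank hp hlt
    have h₂ := ((block_eq_iff j).1 rfl).1
    have h₃ := hgS j
    omega
  · obtain ⟨i, rfl⟩ : ∃ i, g i = p := by simpa [mem_nonFirst] using hp
    exact ⟨i, le_rfl, canonicalRGF_apply hg.injective i⟩

lemma isRGF_canonicalRGF : IsRGF (canonicalRGF m g) := by
  refine isRGF_of_exists_lt (fun p => ?_) (fun p hp => ?_)
  · obtain ⟨j, -, h⟩ := exists_le_canonicalRGF_eq hg hm hgS p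
    omega
  · obtain ⟨j, hjp, h⟩ := exists_le_canonicalRGF_eq hg hm hgS p
    refine ⟨g ⟨j - 1, by omega⟩, (hg (Fin.mk_lt_mk.2 (by omega))).trans_le hjp, ?_⟩
    rw [h, canonicalRGF_apply hg.injective]
    dsimp only
    omega

lemma canonicalRGF_ne_of_lt {i : Fin k} {q : Fin n} (hq : q < g i) :
    canonicalRGF m g q ≠ i + 1 := by
  obtain ⟨j, hjq, h⟩ := exists_le_canonicalRGF_eq hg hm hgS q
  rw [h]
  intro hji
  obtain rfl : j = i := Fin.ext (by omega)
  exact absurd hq (not_lt.2 hjq)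

end Construction

lemma le_add_prefixSum_of_forall_le {k n : ℕ} {m : Fin k → ℕ} {ρ : Fin n → ℕ}
    (hkn : k ≤ n) (hm : ∑ i, m i = n - k)
    (hcount : ∀ j : Fin k, #{q | ρ q = j + 1} = m j + 1) (i : Fin k)
    (p : Fin n) (hp : ∀ j, i ≤ j → ∀ q, ρ q = j + 1 → p ≤ q) :
    (p : ℕ) ≤ i + prefixSum m i := by
  let T : Fin k → Finset (Fin n) := fun j => {q | ρ q = j + 1}
  have hdisj : (Set.univ : Set (Fin k)).PairwiseDisjoint T := fun j _ j' _ hjj' =>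
    disjoint_filter.2 fun q _ hj hj' => hjj' (Fin.ext (by omega))
  have hsub : (univ.filter fun j : Fin k => ¬ (j : ℕ) < i).biUnion T ⊆ Ici p := by
    intro q hq
    obtain ⟨j, hj, hq⟩ := mem_biUnion.1 hq
    exact mem_Ici.2 (hp j (not_lt.1 (mem_filter.1 hj).2) q (mem_filter.1 hq).2)
  have hlarge : ∑ j ∈ univ.filter (fun j : Fin k => ¬ (j : ℕ) < i), (m j + 1) ≤ n - p := by
    calc _ = #((univ.filter fun j : Fin k => ¬ (j : ℕ) < i).biUnion T) := by
          rw [card_biUnion (hdisj.subset (Set.subset_univ _))]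
          simp only [T, hcount]
      _ ≤ #(Ici p) := card_le_card hsub
      _ = n - p := Fin.card_Ici p
  have hsmall :
      ∑ j ∈ univ.filter (fun j : Fin k => (j : ℕ) < i), (m j + 1) = prefixSum m i + i := by
    rw [sum_add_distrib, sum_const, Fin.card_filter_val_lt, min_eq_right i.isLt.le, smul_eq_mul,
      mul_one, prefixSum]
  have htotal : ∑ j, (m j + 1) = n := by
    rw [sum_add_distrib, hm, sum_const, card_univ, Fintype.card_fin, smul_eq_mul, mul_one]
    omega
  rw [← sum_filter_add_sum_filter_not univ (fun j : Fin k => (j : ℕ) < i), hsmall] at htotal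
  have := p.isLt
  omega

lemma exists_strictMono_val_add_one_eq {k n : ℕ} {f : Fin k → ℕ} (hf : StrictMono f)
    (hpos : ∀ i, 1 ≤ f i) (hle : ∀ i, f i ≤ n) :
    ∃ g : Fin k → Fin n, StrictMono g ∧ ∀ i, (g i : ℕ) + 1 = f i :=
  ⟨fun i => ⟨f i - 1, by have := hpos i; have := hle i; omega⟩,
    fun i j hij => Fin.mk_lt_mk.2 (by have := hf hij; have := hpos i; omega),
    fun i => by have := hpos i; dsimp only; omega⟩

end RGF

open RGF in
theorem rgf_exists_iff_general (n k : ℕ) (hkn : k ≤ n)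
    (f : Fin k → ℕ) (hf : StrictMono f) (hf1 : ∀ i : Fin k, (i : ℕ) = 0 → f i = 1)
    (m : Fin k → ℕ) (hm : ∑ i, m i = n - k) :
    (∃ ρ : Fin n → ℕ, IsRGF ρ ∧
        -- the first occurrence of the value `i+1` is at (1-indexed) position `f i`
        (∀ i : Fin k, ∃ p : Fin n, (p : ℕ) + 1 = f i ∧ ρ p = (i : ℕ) + 1 ∧
          ∀ q : Fin n, q < p → ρ q ≠ (i : ℕ) + 1) ∧
        -- besides its first occurrence, the value `i+1` occurs `m i` more times
        (∀ i : Fin k, (univ.filter fun p : Fin n => ρ p = (i : ℕ) + 1).card = m i + 1)) ↔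
      ∀ i : Fin k, 1 ≤ (i : ℕ) →
        f i - ((i : ℕ) + 1) ≤ ∑ j ∈ univ.filter (· < i), m j := by
  change _ ↔ ∀ i : Fin k, 1 ≤ (i : ℕ) → f i - ((i : ℕ) + 1) ≤ prefixSum m i
  constructor
  · rintro ⟨ρ, -, hfirst, hcount⟩ i -
    obtain ⟨p, hp, -⟩ := hfirst i
    have hafter : ∀ j, i ≤ j → ∀ q, ρ q = j + 1 → p ≤ q := by
      intro j hij q hq
      obtain ⟨p', hp', -, hbefore⟩ := hfirst j
      have : p ≤ p' := Fin.le_def.2 (by have := hf.monotone hij; omega)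
      exact this.trans (not_lt.1 fun h => hbefore q h hq)
    have := le_add_prefixSum_of_forall_le hkn hm hcount i p hafter
    omega
  · intro H
    have hbound : ∀ i : Fin k, 1 ≤ f i ∧ f i ≤ i + 1 + prefixSum m i := by
      intro i
      rcases Nat.eq_zero_or_pos (i : ℕ) with h0 | h0
      · simp only [hf1 i h0]
        omega
      · have := hf (show (⟨0, i.pos⟩ : Fin k) < i from h0)
        have := hf1 ⟨0, i.pos⟩ rfl
        have := H i h0
        omega
    have hle : ∀ i, f i ≤ n := fun i => by
      have := hbound i; have := prefixSum_le_sum (m := m) i; have := i.isLt; omega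
    obtain ⟨g, hg, hgf⟩ := exists_strictMono_val_add_one_eq hf (fun i => (hbound i).1) hle
    have hgS : ∀ i, (g i : ℕ) ≤ i + prefixSum m i := fun i => by
      have := hbound i; have := hgf i; omega
    exact ⟨canonicalRGF m g, isRGF_canonicalRGF hg hm hgS, fun i => ⟨g i, hgf i,
      canonicalRGF_apply hg.injective i, fun _ => canonicalRGF_ne_of_lt hg hm hgS⟩,
      card_canonicalRGF_eq hg hm⟩

theorem rgf_exists_iff (n k : ℕ) (hk : 1 ≤ k) (hkn : k ≤ n)
    (f : Fin k → ℕ) (hf : StrictMono f) (hf1 : ∀ i : Fin k, (i : ℕ) = 0 → f i = 1)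
    (m : Fin k → ℕ) (hm : ∑ i, m i = n - k) :
    (∃ ρ : Fin n → ℕ, IsRGF ρ ∧
        -- the first occurrence of the value `i+1` is at (1-indexed) position `f i`
        (∀ i : Fin k, ∃ p : Fin n, (p : ℕ) + 1 = f i ∧ ρ p = (i : ℕ) + 1 ∧
          ∀ q : Fin n, q < p → ρ q ≠ (i : ℕ) + 1) ∧
        -- besides its first occurrence, the value `i+1` occurs `m i` more times
        (∀ i : Fin k, (univ.filter fun p : Fin n => ρ p = (i : ℕ) + 1).card = m i + 1)) ↔
      ∀ i : Fin k, 1 ≤ (i : ℕ) →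
        f i - ((i : ℕ) + 1) ≤ ∑ j ∈ univ.filter (· < i), m j :=
  rgf_exists_iff_general n k hkn f hf hf1 m hm
end

section
/- The number of alternating sign matrices ASM_n = Π_{i=0}^{n-1} (3i+1)!/(n+i)! forms a log-convex sequence: ASM_n^2 ≤ ASM_{n-1} · ASM_{n+1} for all n ≥ 1. -/
/-!
`ASM_{n+1} = ASM_n · r_n` with `r_n = (3n+1)! n! / ((2n)! (2n+1)!)`, and
`r_{n+1} / r_n = 3(3n+4)(3n+2) / (4(2n+1)(2n+3)) ≥ 1`. A nonnegative sequence whose successive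
ratios increase is log-convex.
-/

open Finset

/-- The number of `n × n` alternating sign matrices,
`ASM_n = ∏_{i=0}^{n-1} (3i+1)!/(n+i)!`. -/
def asm (n : ℕ) : ℚ :=
  ∏ i ∈ range n, ((3 * i + 1).factorial : ℚ) / ((n + i).factorial : ℚ)

theorem sq_le_mul_of_succ_eq_mul_of_ratio_le {R : Type*} [CommSemiring R] [PartialOrder R]
    [IsOrderedRing R] {a r : ℕ → R} (ha : ∀ n, 0 ≤ a n) (hsucc : ∀ n, a (n + 1) = a n * r n)
    (n : ℕ) (hr : r n ≤ r (n + 1)) : a (n + 1) ^ 2 ≤ a n * a (n + 2) :=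
  calc a (n + 1) ^ 2 = a n * a (n + 1) * r n := by rw [sq, hsucc n]; ring
    _ ≤ a n * a (n + 1) * r (n + 1) := mul_le_mul_of_nonneg_left hr (mul_nonneg (ha n) (ha _))
    _ = a n * a (n + 2) := by rw [hsucc (n + 1)]; ring

def asmDenom (n : ℕ) : ℕ := ∏ i ∈ range n, (n + i).factorial

theorem asmDenom_pos (n : ℕ) : 0 < asmDenom n :=
  prod_pos fun _ _ => Nat.factorial_pos _

theorem asmDenom_succ_mul (n : ℕ) :
    asmDenom (n + 1) * n.factorial = asmDenom n * (2 * n).factorial * (2 * n + 1).factorial := by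
  have hlow : asmDenom n * (2 * n).factorial =
      n.factorial * ∏ i ∈ range n, (n + 1 + i).factorial := by
    rw [asmDenom, two_mul, ← prod_range_succ (fun i => (n + i).factorial), prod_range_succ']
    simp only [add_assoc, add_comm 1, add_zero]; ring
  rw [asmDenom, prod_range_succ, mul_assoc, hlow]
  ring_nf

theorem asm_eq_div (n : ℕ) :
    asm n = (∏ i ∈ range n, ((3 * i + 1).factorial : ℚ)) / asmDenom n := by
  rw [asm, prod_div_distrib, asmDenom, Nat.cast_prod]

def asmRatio (n : ℕ) : ℚ :=
  (3 * n + 1).factorial * n.factorial / ((2 * n).factorial * (2 * n + 1).factorial)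

theorem asm_succ (n : ℕ) : asm (n + 1) = asm n * asmRatio n := by
  have hD := asmDenom_succ_mul n
  have hD0 : (asmDenom n : ℚ) ≠ 0 := by exact_mod_cast (asmDenom_pos n).ne'
  have hD1 : (asmDenom (n + 1) : ℚ) ≠ 0 := by exact_mod_cast (asmDenom_pos (n + 1)).ne'
  rw [asm_eq_div, asm_eq_div, asmRatio, prod_range_succ]
  field_simp
  exact_mod_cast hD.symm

theorem asmRatio_succ (n : ℕ) :
    asmRatio (n + 1) =
      asmRatio n * (3 * (3 * n + 4) * (3 * n + 2) / (4 * (2 * n + 1) * (2 * n + 3))) := by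
  rw [asmRatio, asmRatio, show 3 * (n + 1) + 1 = 3 * n + 1 + 1 + 1 + 1 by ring,
    show 2 * (n + 1) = 2 * n + 1 + 1 by ring]
  simp only [Nat.factorial_succ]
  push_cast
  field_simp
  ring

theorem asmRatio_le_succ (n : ℕ) : asmRatio n ≤ asmRatio (n + 1) := by
  have hq : (1 : ℚ) ≤ 3 * (3 * n + 4) * (3 * n + 2) / (4 * (2 * n + 1) * (2 * n + 3)) := by
    rw [one_le_div (by positivity)]
    nlinarith [(n.cast_nonneg : (0 : ℚ) ≤ n)]
  rw [asmRatio_succ]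
  exact le_mul_of_one_le_right (by rw [asmRatio]; positivity) hq

theorem asm_nonneg (n : ℕ) : 0 ≤ asm n :=
  prod_nonneg fun _ _ => by positivity

theorem asm_log_convex (n : ℕ) (hn : 1 ≤ n) :
    asm n ^ 2 ≤ asm (n - 1) * asm (n + 1) := by
  obtain ⟨m, rfl⟩ := Nat.exists_eq_add_of_le' hn
  exact sq_le_mul_of_succ_eq_mul_of_ratio_le asm_nonneg asm_succ m (asmRatio_le_succ m)
end
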